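/- arXiv:1312.0365 — 2 statements merged into one kernel-verified Lean document; each statement's English description precedes it below -/
import Mathlib

section
/- Suppose P₁[λ₀ = 1] < 1 and p₁ ∈ (0,1) solves 1 = E₁[1/(p₁ + (1−p₁)·λ₀)], and let P₁* be the associated probability measure on ℋ^A. Then the relative odds of A^c are the same under P₀ and P₁*: (P₀[A^c|ℋ]/P₀[A|ℋ])·(p₀/(1−p₀)) = λ₀ = (P₁*[A^c|ℋ]/P₁*[A|ℋ])·(p₁/(1−p₁)) almost surely. -/
open MeasureTheory Set

/-!
Both identities are Bayes' formula. If `P(H ∩ B) = ∫_H a dμ` and `P(H ∩ Bᶜ) = ∫_H b dμ` for all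
`H ∈ ℋ`, then `P|ℋ` has `μ`-density `a + b`, so `P[B|ℋ] = a / (a + b)` and `P[Bᶜ|ℋ] = b / (a + b)`,
and the posterior odds of `Bᶜ` are `b / a`. For `P₀` take `a = p₀ f_A`, `b = (1 - p₀) f_{A^c}`;
for `P₁*` take `μ = P₁`, `a = p₁ / d`, `b = (1 - p₁) λ₀ / d` with `d = p₁ + (1 - p₁) λ₀`.
Dividing by the prior odds leaves `λ₀` in both cases.
-/

lemma integral_indicator_one_mul {Ω : Type*} {_ : MeasurableSpace Ω} {μ : Measure Ω} {s : Set Ω}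
    (hs : MeasurableSet s) (g : Ω → ℝ) :
    ∫ ω, s.indicator (fun _ => (1 : ℝ)) ω * g ω ∂μ = ∫ ω in s, g ω ∂μ := by
  simp_rw [← indicator_mul_left, one_mul]
  exact integral_indicator hs

lemma integrable_div_of_ae_nonneg_of_le {Ω : Type*} {_ : MeasurableSpace Ω} {μ : Measure Ω}
    [IsFiniteMeasure μ] {f g : Ω → ℝ} (hfg : AEStronglyMeasurable (fun ω => f ω / g ω) μ)
    (h : ∀ᵐ ω ∂μ, 0 ≤ f ω ∧ f ω ≤ g ω) : Integrable (fun ω => f ω / g ω) μ := by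
  refine Integrable.of_bound hfg 1 ?_
  filter_upwards [h] with ω ⟨hf, hfg⟩
  rw [Real.norm_of_nonneg (div_nonneg hf (hf.trans hfg))]
  exact div_le_one_of_le₀ hfg (hf.trans hfg)

section Bayes

variable {Ω : Type*} {m m0 : MeasurableSpace Ω} {P : @Measure Ω m0} {μ : @Measure Ω m}
  {B : Set Ω} {a b D : Ω → ℝ}

lemma trim_eq_withDensity_of_measureReal_eq (hm : m ≤ m0) [IsFiniteMeasure P]
    (hD_int : Integrable D μ) (hD : 0 ≤ᵐ[μ] D)
    (hPD : ∀ H, MeasurableSet[m] H → P.real H = ∫ ω in H, D ω ∂μ) :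
    P.trim hm = μ.withDensity fun ω => ENNReal.ofReal (D ω) := by
  refine @Measure.ext _ m _ _ fun H hH => ?_
  rw [trim_measurableSet_eq hm hH, withDensity_apply (μ := μ) _ hH,
    ← ofReal_integral_eq_lintegral_ofReal hD_int.integrableOn (ae_restrict_of_ae hD),
    ← hPD H hH, ofReal_measureReal]

lemma trim_eq_withDensity_add (hm : m ≤ m0) [IsFiniteMeasure P] (hB : MeasurableSet[m0] B)
    (ha_int : Integrable a μ) (hb_int : Integrable b μ) (ha : 0 ≤ᵐ[μ] a) (hb : 0 ≤ᵐ[μ] b)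
    (hPa : ∀ H, MeasurableSet[m] H → P.real (H ∩ B) = ∫ ω in H, a ω ∂μ)
    (hPb : ∀ H, MeasurableSet[m] H → P.real (H ∩ Bᶜ) = ∫ ω in H, b ω ∂μ) :
    P.trim hm = μ.withDensity fun ω => ENNReal.ofReal (a ω + b ω) := by
  refine trim_eq_withDensity_of_measureReal_eq hm (ha_int.add hb_int)
    (by filter_upwards [ha, hb] with ω ha hb using add_nonneg ha hb) fun H hH => ?_
  rw [integral_add ha_int.integrableOn hb_int.integrableOn, ← hPa H hH, ← hPb H hH,
    ← sdiff_eq, measureReal_inter_add_sdiff hB]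

lemma trim_absolutelyContinuous_of_eq_withDensity (hm : m ≤ m0)
    (hP : P.trim hm = μ.withDensity fun ω => ENNReal.ofReal (D ω)) : P.trim hm ≪ μ :=
  hP ▸ withDensity_absolutelyContinuous μ _

lemma setIntegral_eq_setIntegral_mul_of_trim_eq_withDensity (hm : m ≤ m0)
    (hP : P.trim hm = μ.withDensity fun ω => ENNReal.ofReal (D ω))
    (hD_meas : Measurable[m] D) (hD : 0 ≤ᵐ[μ] D) {g : Ω → ℝ} (hg : StronglyMeasurable[m] g)
    {H : Set Ω} (hH : MeasurableSet[m] H) :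
    ∫ ω in H, g ω ∂P = ∫ ω in H, D ω * g ω ∂μ := by
  rw [setIntegral_trim hm hg hH, hP, @setIntegral_withDensity_eq_setIntegral_toReal_smul _ _ m μ
    _ _ _ _ hD_meas.ennreal_ofReal (ae_of_all _ fun _ => ENNReal.ofReal_lt_top) _ hH]
  refine setIntegral_congr_ae hH ?_
  filter_upwards [hD] with ω hω _
  rw [ENNReal.toReal_ofReal hω, smul_eq_mul]

lemma ae_pos_of_trim_eq_withDensity (hm : m ≤ m0)
    (hP : P.trim hm = μ.withDensity fun ω => ENNReal.ofReal (D ω)) (hD_meas : Measurable[m] D) :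
    ∀ᵐ ω ∂P, 0 < D ω := by
  refine ae_of_ae_trim hm ?_
  rw [hP, ae_iff, withDensity_apply_eq_zero hD_meas.ennreal_ofReal]
  convert measure_empty (μ := μ)
  ext ω
  simp

lemma condExp_indicator_ae_eq_div (hm : m ≤ m0) [IsFiniteMeasure P] (hB : MeasurableSet[m0] B)
    (hP : P.trim hm = μ.withDensity fun ω => ENNReal.ofReal (D ω)) (hD_meas : Measurable[m] D)
    (ha_meas : Measurable[m] a) (ha : ∀ᵐ ω ∂μ, 0 ≤ a ω ∧ a ω ≤ D ω)
    (hPa : ∀ H, MeasurableSet[m] H → P.real (H ∩ B) = ∫ ω in H, a ω ∂μ) :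
    condExp m P (B.indicator fun _ => (1 : ℝ)) =ᵐ[P] fun ω => a ω / D ω := by
  have hg_meas : Measurable[m] fun ω => a ω / D ω := ha_meas.div hD_meas
  have hg_int : Integrable (fun ω => a ω / D ω) P :=
    integrable_div_of_ae_nonneg_of_le (hg_meas.mono hm le_rfl).aestronglyMeasurable
      (ae_of_ae_trim hm ((trim_absolutelyContinuous_of_eq_withDensity hm hP).ae_le ha))
  refine (ae_eq_condExp_of_forall_setIntegral_eq hm ((integrable_const 1).indicator hB)
    (fun _ _ _ => hg_int.integrableOn) (fun H hH _ => ?_) hg_meas.aestronglyMeasurable).symm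
  rw [setIntegral_eq_setIntegral_mul_of_trim_eq_withDensity hm hP hD_meas
      (ha.mono fun _ h => h.1.trans h.2) hg_meas.stronglyMeasurable hH,
    integral_indicator_const _ hB, smul_eq_mul, mul_one, measureReal_restrict_apply hB,
    inter_comm, hPa H hH]
  refine setIntegral_congr_ae hH ?_
  filter_upwards [ha] with ω ⟨ha, haD⟩ _
  rcases eq_or_ne (D ω) 0 with hD | hD
  · rw [hD, zero_mul, le_antisymm (hD ▸ haD) ha]
  · exact mul_div_cancel₀ _ hD

theorem condExp_compl_div_condExp_ae_eq (hm : m ≤ m0) [IsFiniteMeasure P]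
    (hB : MeasurableSet[m0] B)
    (hP : P.trim hm = μ.withDensity fun ω => ENNReal.ofReal (a ω + b ω))
    (ha_meas : Measurable[m] a) (hb_meas : Measurable[m] b) (ha : 0 ≤ᵐ[μ] a) (hb : 0 ≤ᵐ[μ] b)
    (hPa : ∀ H, MeasurableSet[m] H → P.real (H ∩ B) = ∫ ω in H, a ω ∂μ)
    (hPb : ∀ H, MeasurableSet[m] H → P.real (H ∩ Bᶜ) = ∫ ω in H, b ω ∂μ) :
    ∀ᵐ ω ∂P, condExp m P (Bᶜ.indicator fun _ => (1 : ℝ)) ω /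
      condExp m P (B.indicator fun _ => (1 : ℝ)) ω = b ω / a ω := by
  have hD_meas := ha_meas.add hb_meas
  have hBa := condExp_indicator_ae_eq_div hm hB hP hD_meas ha_meas
    (by filter_upwards [ha, hb] with ω ha hb using ⟨ha, le_add_of_nonneg_right hb⟩) hPa
  have hBb := condExp_indicator_ae_eq_div hm hB.compl hP hD_meas hb_meas
    (by filter_upwards [ha, hb] with ω ha hb using ⟨hb, le_add_of_nonneg_left ha⟩) hPb
  filter_upwards [hBa, hBb, ae_pos_of_trim_eq_withDensity hm hP hD_meas] with ω hBa hBb hD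
  rw [hBa, hBb, div_div_div_cancel_right₀ hD.ne']

lemma condExp_odds_ae_eq_of_posterior (hm : m ≤ m0) [IsFiniteMeasure P] [IsFiniteMeasure μ]
    (hB : MeasurableSet[m0] B) {p : ℝ} (hp0 : 0 < p) (hp1 : p < 1) {L : Ω → ℝ}
    (hL_meas : Measurable[m] L) (hL : 0 ≤ᵐ[μ] L)
    (hPa : ∀ H, MeasurableSet[m] H → P.real (H ∩ B) = ∫ ω in H, p / (p + (1 - p) * L ω) ∂μ)
    (hPb : ∀ H, MeasurableSet[m] H →
      P.real (H ∩ Bᶜ) = ∫ ω in H, (1 - p) * L ω / (p + (1 - p) * L ω) ∂μ) :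
    ∀ᵐ ω ∂P, condExp m P (Bᶜ.indicator fun _ => (1 : ℝ)) ω /
      condExp m P (B.indicator fun _ => (1 : ℝ)) ω * (p / (1 - p)) = L ω := by
  have hq : 0 < 1 - p := sub_pos.2 hp1
  have hd_meas : Measurable[m] fun ω => p + (1 - p) * L ω :=
    measurable_const.add (hL_meas.const_mul _)
  have ha_meas : Measurable[m] fun ω => p / (p + (1 - p) * L ω) := measurable_const.div hd_meas
  have hb_meas : Measurable[m] fun ω => (1 - p) * L ω / (p + (1 - p) * L ω) :=
    (hL_meas.const_mul _).div hd_meas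
  have ha : ∀ᵐ ω ∂μ, 0 ≤ p ∧ p ≤ p + (1 - p) * L ω :=
    hL.mono fun ω h => ⟨hp0.le, le_add_of_nonneg_right (mul_nonneg hq.le h)⟩
  have hb : ∀ᵐ ω ∂μ, 0 ≤ (1 - p) * L ω ∧ (1 - p) * L ω ≤ p + (1 - p) * L ω :=
    hL.mono fun ω h => ⟨mul_nonneg hq.le h, le_add_of_nonneg_left hp0.le⟩
  have ha' := ha.mono fun _ h => div_nonneg h.1 (h.1.trans h.2)
  have hb' := hb.mono fun _ h => div_nonneg h.1 (h.1.trans h.2)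
  have hP := trim_eq_withDensity_add hm hB
    (integrable_div_of_ae_nonneg_of_le ha_meas.aestronglyMeasurable ha)
    (integrable_div_of_ae_nonneg_of_le hb_meas.aestronglyMeasurable hb) ha' hb' hPa hPb
  have hLP : ∀ᵐ ω ∂P, 0 ≤ L ω :=
    ae_of_ae_trim hm ((trim_absolutelyContinuous_of_eq_withDensity hm hP).ae_le hL)
  filter_upwards [condExp_compl_div_condExp_ae_eq hm hB hP ha_meas hb_meas ha' hb' hPa hPb, hLP]
    with ω hodds hLω
  have hd : 0 < p + (1 - p) * L ω := add_pos_of_pos_of_nonneg hp0 (mul_nonneg hq.le hLω)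
  rw [hodds, div_div_div_cancel_right₀ hd.ne']
  field_simp

end Bayes

theorem total_odds_relative_odds_invariant_general
    {Ω : Type*} {𝒜 ℋ : MeasurableSpace Ω} (hℋ : ℋ ≤ 𝒜)
    (P₀ : @Measure Ω 𝒜) [IsProbabilityMeasure P₀]
    (P₁ : @Measure Ω ℋ) [IsProbabilityMeasure P₁] (habs : P₁ ≪ P₀.trim hℋ)
    (A : Set Ω) (hA : MeasurableSet[𝒜] A)
    (p₀ : ℝ) (hp₀0 : 0 < p₀) (hp₀1 : p₀ < 1)
    (μ : @Measure Ω ℋ)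
    (fA fAc : Ω → ℝ)
    (hfA_meas : @Measurable Ω ℝ ℋ _ fA) (hfAc_meas : @Measurable Ω ℝ ℋ _ fAc)
    (hfA_int : Integrable fA μ) (hfAc_int : Integrable fAc μ)
    (hfA_pos : ∀ᵐ ω ∂μ, 0 < fA ω) (hfAc_pos : ∀ᵐ ω ∂μ, 0 < fAc ω)
    (hdensA : ∀ H : Set Ω, MeasurableSet[ℋ] H →
      (P₀ (H ∩ A)).toReal = p₀ * ∫ ω in H, fA ω ∂μ)
    (hdensAc : ∀ H : Set Ω, MeasurableSet[ℋ] H →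
      (P₀ (H ∩ Aᶜ)).toReal = (1 - p₀) * ∫ ω in H, fAc ω ∂μ)
    (p₁ : ℝ) (hp₁ : p₁ ∈ Set.Ioo (0:ℝ) 1)
    (P₁star : @Measure Ω (ℋ ⊔ MeasurableSpace.generateFrom {A}))
    [IsProbabilityMeasure P₁star]
    (hstar : ∀ H G : Set Ω, MeasurableSet[ℋ] H → MeasurableSet[ℋ] G →
      (P₁star ((A ∩ H) ∪ (Aᶜ ∩ G))).toReal =
        (∫ ω, H.indicator (fun _ => (1:ℝ)) ω *
            (p₁ / (p₁ + (1 - p₁) * (fAc ω / fA ω))) ∂P₁) +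
        (∫ ω, G.indicator (fun _ => (1:ℝ)) ω *
            ((1 - p₁) * (fAc ω / fA ω) / (p₁ + (1 - p₁) * (fAc ω / fA ω))) ∂P₁)) :
    (∀ᵐ ω ∂P₀,
      (condExp ℋ P₀ (Aᶜ.indicator fun _ => (1:ℝ)) ω /
        condExp ℋ P₀ (A.indicator fun _ => (1:ℝ)) ω) * (p₀ / (1 - p₀)) =
          fAc ω / fA ω) ∧
    (∀ᵐ ω ∂P₁star,
      (condExp ℋ P₁star (Aᶜ.indicator fun _ => (1:ℝ)) ω /
        condExp ℋ P₁star (A.indicator fun _ => (1:ℝ)) ω) * (p₁ / (1 - p₁)) =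
          fAc ω / fA ω) := by
  have hq₀ : 0 < 1 - p₀ := sub_pos.2 hp₀1
  have ha : 0 ≤ᵐ[μ] fun ω => p₀ * fA ω := hfA_pos.mono fun _ h => by positivity
  have hb : 0 ≤ᵐ[μ] fun ω => (1 - p₀) * fAc ω := hfAc_pos.mono fun _ h => by positivity
  have hPa : ∀ H, MeasurableSet[ℋ] H → P₀.real (H ∩ A) = ∫ ω in H, p₀ * fA ω ∂μ :=
    fun H hH => by rw [integral_const_mul]; exact hdensA H hH
  have hPb : ∀ H, MeasurableSet[ℋ] H → P₀.real (H ∩ Aᶜ) = ∫ ω in H, (1 - p₀) * fAc ω ∂μ :=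
    fun H hH => by rw [integral_const_mul]; exact hdensAc H hH
  have hP₀ := trim_eq_withDensity_add hℋ hA (hfA_int.const_mul p₀)
    (hfAc_int.const_mul (1 - p₀)) ha hb hPa hPb
  have hL : ∀ᵐ ω ∂P₁, 0 ≤ fAc ω / fA ω :=
    (habs.trans (trim_absolutelyContinuous_of_eq_withDensity hℋ hP₀)).ae_le <| by
      filter_upwards [hfA_pos, hfAc_pos] with ω hfA hfAc using div_nonneg hfAc.le hfA.le
  have hA' : MeasurableSet[ℋ ⊔ MeasurableSpace.generateFrom {A}] A :=
    le_sup_right (a := ℋ) _ (MeasurableSpace.measurableSet_generateFrom rfl)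
  refine ⟨?_, condExp_odds_ae_eq_of_posterior (L := fun ω => fAc ω / fA ω) le_sup_left hA'
    hp₁.1 hp₁.2 (hfAc_meas.div hfA_meas) hL (fun H hH => ?_) (fun H hH => ?_)⟩
  · filter_upwards [condExp_compl_div_condExp_ae_eq hℋ hA hP₀ (hfA_meas.const_mul p₀)
      (hfAc_meas.const_mul _) ha hb hPa hPb] with ω hodds
    rw [hodds, mul_div_mul_comm]
    field_simp
  · simpa [measureReal_def, inter_comm, integral_indicator_one_mul hH]
      using hstar H ∅ hH MeasurableSet.empty
  · simpa [measureReal_def, inter_comm, integral_indicator_one_mul hH]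
      using hstar ∅ H MeasurableSet.empty hH

/-- **relative odds are invariant.** Suppose `P₁[λ₀ = 1] < 1` and
`p₁ ∈ (0,1)` solves `1 = E₁[1/(p₁ + (1−p₁)·λ₀)]`, and let `P₁*` be the associated
probability measure on `ℋ^A`. Then the relative odds of `A^c` are the same under `P₀`
and `P₁*`:
`(P₀[A^c|ℋ]/P₀[A|ℋ])·(p₀/(1−p₀)) = λ₀ = (P₁*[A^c|ℋ]/P₁*[A|ℋ])·(p₁/(1−p₁))` a.s. -/
theorem total_odds_relative_odds_invariant
    {Ω : Type*} {𝒜 ℋ : MeasurableSpace Ω} (hℋ : ℋ ≤ 𝒜)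
    (P₀ : @Measure Ω 𝒜) [IsProbabilityMeasure P₀]
    (P₁ : @Measure Ω ℋ) [IsProbabilityMeasure P₁] (habs : P₁ ≪ P₀.trim hℋ)
    (A : Set Ω) (hA : MeasurableSet[𝒜] A)
    (p₀ : ℝ) (hp₀ : p₀ = (P₀ A).toReal) (hp₀0 : 0 < p₀) (hp₀1 : p₀ < 1)
    (μ : @Measure Ω ℋ) [SigmaFinite μ]
    (fA fAc : Ω → ℝ)
    (hfA_meas : @Measurable Ω ℝ ℋ _ fA) (hfAc_meas : @Measurable Ω ℝ ℋ _ fAc)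
    (hfA_int : Integrable fA μ) (hfAc_int : Integrable fAc μ)
    (hfA_pos : ∀ᵐ ω ∂μ, 0 < fA ω) (hfAc_pos : ∀ᵐ ω ∂μ, 0 < fAc ω)
    (hdensA : ∀ H : Set Ω, MeasurableSet[ℋ] H →
      (P₀ (H ∩ A)).toReal = p₀ * ∫ ω in H, fA ω ∂μ)
    (hdensAc : ∀ H : Set Ω, MeasurableSet[ℋ] H →
      (P₀ (H ∩ Aᶜ)).toReal = (1 - p₀) * ∫ ω in H, fAc ω ∂μ)
    (hlam : P₁ {ω | fAc ω / fA ω = 1} < 1)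
    (p₁ : ℝ) (hp₁ : p₁ ∈ Set.Ioo (0:ℝ) 1)
    (heq : (1:ℝ) = ∫ ω, 1 / (p₁ + (1 - p₁) * (fAc ω / fA ω)) ∂P₁)
    (P₁star : @Measure Ω (ℋ ⊔ MeasurableSpace.generateFrom {A}))
    [IsProbabilityMeasure P₁star]
    (hstar : ∀ H G : Set Ω, MeasurableSet[ℋ] H → MeasurableSet[ℋ] G →
      (P₁star ((A ∩ H) ∪ (Aᶜ ∩ G))).toReal =
        (∫ ω, H.indicator (fun _ => (1:ℝ)) ω *
            (p₁ / (p₁ + (1 - p₁) * (fAc ω / fA ω))) ∂P₁) +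
        (∫ ω, G.indicator (fun _ => (1:ℝ)) ω *
            ((1 - p₁) * (fAc ω / fA ω) / (p₁ + (1 - p₁) * (fAc ω / fA ω))) ∂P₁)) :
    (∀ᵐ ω ∂P₀,
      (condExp ℋ P₀ (Aᶜ.indicator fun _ => (1:ℝ)) ω /
        condExp ℋ P₀ (A.indicator fun _ => (1:ℝ)) ω) * (p₀ / (1 - p₀)) =
          fAc ω / fA ω) ∧
    (∀ᵐ ω ∂P₁star,
      (condExp ℋ P₁star (Aᶜ.indicator fun _ => (1:ℝ)) ω /
        condExp ℋ P₁star (A.indicator fun _ => (1:ℝ)) ω) * (p₁ / (1 - p₁)) =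
          fAc ω / fA ω) :=
  total_odds_relative_odds_invariant_general hℋ P₀ P₁ habs A hA p₀ hp₀0 hp₀1 μ fA fAc hfA_meas
    hfAc_meas hfA_int hfAc_int hfA_pos hfAc_pos hdensA hdensAc p₁ hp₁ P₁star hstar
end

section
/- Let X > 0 be a random variable on a probability space with P[X = 1] < 1. Then there exists a solution p ∈ [0,1) to the equation E[1/(p + (1−p)·X)] = 1 if and only if E[X] > 1 and E[X⁻¹] ≥ 1. If a solution p ∈ [0,1) exists, it is unique; and the unique solution is p = 0 if and only if E[X⁻¹] = 1. -/
/-!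
Write `F p = E[1 / (p + (1 - p) X)]`, so that `F 0 = E[X⁻¹]` and `F 1 = 1`. For each `x > 0` the
map `p ↦ 1 / (p + (1 - p) x)` is convex, strictly unless `x = 1`, so `F` lies strictly below its
chords ending at `(1, 1)`. Hence a root `p < 1` of `F = 1` forces `F < 1` on `(p, 1)`, which gives
uniqueness, and the chord from `0` gives `E[X⁻¹] ≥ 1`. The tangent at `p = 1` has slope `E[X] - 1`,
so `F q ≥ 1 - (1 - q) (E[X] - 1)` and `F < 1` somewhere on `(p, 1)` forces `E[X] > 1`.
Conversely, Fatou's lemma gives `F > 1` near `0` when `E[X⁻¹] > 1` and `F < 1` near `1` when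
`E[X] > 1`; as `F` is continuous on `(0, 1]`, the intermediate value theorem produces a root.
-/

open MeasureTheory Set Filter Topology
open scoped ENNReal

lemma mix_pos {p x : ℝ} (hp0 : 0 ≤ p) (hp1 : p ≤ 1) (hx : 0 < x) : 0 < p + (1 - p) * x := by
  rcases hp0.eq_or_lt with rfl | hp
  · simpa
  · nlinarith

lemma mix_chord (p t x : ℝ) :
    (t * p + (1 - t)) + (1 - (t * p + (1 - t))) * x = t * (p + (1 - p) * x) + (1 - t) := by
  ring

lemma chord_pos {d t : ℝ} (hd : 0 < d) (ht0 : 0 ≤ t) (ht1 : t ≤ 1) : 0 < t * d + (1 - t) := by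
  have := mix_pos (sub_nonneg.2 ht1) (sub_le_self 1 ht0) hd
  linarith

lemma chord_sub_one_div {d t : ℝ} (hd : 0 < d) (ht0 : 0 ≤ t) (ht1 : t ≤ 1) :
    t * (1 / d) + (1 - t) - 1 / (t * d + (1 - t)) =
      t * (1 - t) * (d - 1) ^ 2 / (d * (t * d + (1 - t))) := by
  have := chord_pos hd ht0 ht1
  field_simp
  ring

lemma one_div_chord_le {d t : ℝ} (hd : 0 < d) (ht0 : 0 ≤ t) (ht1 : t ≤ 1) :
    1 / (t * d + (1 - t)) ≤ t * (1 / d) + (1 - t) := by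
  rw [← sub_nonneg, chord_sub_one_div hd ht0 ht1]
  have := chord_pos hd ht0 ht1
  have : 0 ≤ 1 - t := by linarith
  positivity

lemma one_div_chord_lt {d t : ℝ} (hd : 0 < d) (hd1 : d ≠ 1) (ht0 : 0 < t) (ht1 : t < 1) :
    1 / (t * d + (1 - t)) < t * (1 / d) + (1 - t) := by
  rw [← sub_pos, chord_sub_one_div hd ht0.le ht1.le]
  have := chord_pos hd ht0.le ht1.le
  have : 0 < 1 - t := by linarith
  have : d - 1 ≠ 0 := sub_ne_zero.2 hd1
  positivity

lemma tendsto_ofReal_one_div_mix {p x : ℝ} (hp : p + (1 - p) * x ≠ 0) :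
    Tendsto (fun q => ENNReal.ofReal (1 / (q + (1 - q) * x))) (𝓝 p)
      (𝓝 (ENNReal.ofReal (1 / (p + (1 - p) * x)))) :=
  ENNReal.continuous_ofReal.continuousAt.comp (f := fun q => 1 / (q + (1 - q) * x))
    (by fun_prop (disch := exact hp))

lemma frequently_ae_notMem_of_measure_lt_one {Ω : Type*} [MeasurableSpace Ω] {P : Measure Ω}
    [IsProbabilityMeasure P] {s : Set Ω} (hs : P s < 1) : ∃ᵐ ω ∂P, ω ∉ s := by
  rw [frequently_ae_iff]
  intro h
  have := measure_univ_le_add_compl (μ := P) s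
  rw [measure_univ, show P sᶜ = 0 from h, add_zero] at this
  exact this.not_gt hs

lemma eventually_lt_lintegral_of_tendsto {α ι : Type*} [MeasurableSpace α] {μ : Measure α}
    {l : Filter ι} [l.IsCountablyGenerated] {f : ι → α → ℝ≥0∞} {g : α → ℝ≥0∞} {c : ℝ≥0∞}
    (hf : ∀ i, AEMeasurable (f i) μ) (hfg : ∀ᵐ a ∂μ, Tendsto (fun i => f i a) l (𝓝 (g a)))
    (hc : c < ∫⁻ a, g a ∂μ) : ∀ᶠ i in l, c < ∫⁻ a, f i a ∂μ := by
  rcases l.eq_or_neBot with rfl | hl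
  · exact eventually_bot
  refine eventually_lt_of_lt_liminf (hc.trans_le ?_)
  calc ∫⁻ a, g a ∂μ = ∫⁻ a, liminf (fun i => f i a) l ∂μ :=
        lintegral_congr_ae (hfg.mono fun _ h => h.liminf_eq.symm)
    _ ≤ _ := lintegral_liminf_le' hf

noncomputable def invMixMean {Ω : Type*} [MeasurableSpace Ω] (P : Measure Ω) (X : Ω → ℝ)
    (p : ℝ) : ℝ≥0∞ :=
  ∫⁻ ω, ENNReal.ofReal (1 / (p + (1 - p) * X ω)) ∂P

namespace invMixMean

variable {Ω : Type*} [MeasurableSpace Ω] {P : Measure Ω} {X : Ω → ℝ} {p q t : ℝ}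

lemma zero : invMixMean P X 0 = ∫⁻ ω, ENNReal.ofReal (X ω)⁻¹ ∂P := by
  simp [invMixMean]

lemma ne_top [IsFiniteMeasure P] (hX : ∀ᵐ ω ∂P, 0 < X ω) (hp0 : 0 < p) (hp1 : p ≤ 1) :
    invMixMean P X p ≠ ∞ := by
  refine ne_top_of_le_ne_top (b := ∫⁻ _, ENNReal.ofReal (1 / p) ∂P) ?_ ?_
  · simp [lintegral_const, ENNReal.mul_ne_top, measure_ne_top]
  · exact lintegral_mono_ae <| hX.mono fun ω hω =>
      ENNReal.ofReal_le_ofReal (one_div_le_one_div_of_le hp0 (by nlinarith))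

lemma continuousOn [IsFiniteMeasure P] (hXm : AEMeasurable X P) (hX : ∀ᵐ ω ∂P, 0 < X ω)
    {a : ℝ} (ha : 0 < a) : ContinuousOn (invMixMean P X) (Icc a 1) := by
  intro p hp
  refine tendsto_lintegral_filter_of_dominated_convergence' (fun _ => ENNReal.ofReal (1 / a))
    (.of_forall fun q => by fun_prop) ?_ (by simp [lintegral_const, ENNReal.mul_ne_top]) ?_
  · refine eventually_nhdsWithin_of_forall fun q hq => hX.mono fun ω hω =>
      ENNReal.ofReal_le_ofReal (one_div_le_one_div_of_le ha (by nlinarith [hq.1, hq.2]))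
  · exact hX.mono fun ω hω => (tendsto_ofReal_one_div_mix
      (mix_pos (ha.le.trans hp.1) hp.2 hω).ne').mono_left nhdsWithin_le_nhds

lemma lintegral_chord [IsProbabilityMeasure P] (hX : ∀ᵐ ω ∂P, 0 < X ω) (hp0 : 0 ≤ p)
    (hp1 : p ≤ 1) (ht0 : 0 ≤ t) (ht1 : t ≤ 1) :
    ∫⁻ ω, ENNReal.ofReal (t * (1 / (p + (1 - p) * X ω)) + (1 - t)) ∂P =
      ENNReal.ofReal t * invMixMean P X p + ENNReal.ofReal (1 - t) := by
  calc ∫⁻ ω, ENNReal.ofReal (t * (1 / (p + (1 - p) * X ω)) + (1 - t)) ∂P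
      = ∫⁻ ω, (ENNReal.ofReal t * ENNReal.ofReal (1 / (p + (1 - p) * X ω))
          + ENNReal.ofReal (1 - t)) ∂P := lintegral_congr_ae <| by
        filter_upwards [hX] with ω hω
        have := mix_pos hp0 hp1 hω
        rw [ENNReal.ofReal_add (by positivity) (by linarith), ENNReal.ofReal_mul ht0]
    _ = _ := by
      rw [lintegral_add_right _ measurable_const, lintegral_const_mul' _ _ ENNReal.ofReal_ne_top,
        lintegral_const, measure_univ, mul_one, invMixMean]

lemma chord_le [IsProbabilityMeasure P] (hX : ∀ᵐ ω ∂P, 0 < X ω) (hp0 : 0 ≤ p) (hp1 : p ≤ 1)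
    (ht0 : 0 ≤ t) (ht1 : t ≤ 1) :
    invMixMean P X (t * p + (1 - t)) ≤
      ENNReal.ofReal t * invMixMean P X p + ENNReal.ofReal (1 - t) := by
  rw [← lintegral_chord hX hp0 hp1 ht0 ht1]
  refine lintegral_mono_ae <| hX.mono fun ω hω => ?_
  rw [mix_chord]
  exact ENNReal.ofReal_le_ofReal (one_div_chord_le (mix_pos hp0 hp1 hω) ht0 ht1)

lemma chord_lt [IsProbabilityMeasure P] (hXm : AEMeasurable X P) (hX : ∀ᵐ ω ∂P, 0 < X ω)
    (hX1 : ∃ᵐ ω ∂P, X ω ≠ 1) (hp0 : 0 ≤ p) (hp1 : p < 1) (ht0 : 0 < t) (ht1 : t < 1) :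
    invMixMean P X (t * p + (1 - t)) <
      ENNReal.ofReal t * invMixMean P X p + ENNReal.ofReal (1 - t) := by
  rw [← lintegral_chord hX hp0 hp1.le ht0.le ht1.le]
  refine lintegral_strict_mono_of_ae_le_of_frequently_ae_lt (by fun_prop)
    (ne_top hX (by nlinarith) (by nlinarith)) (hX.mono fun ω hω => ?_)
    ((hX1.and_eventually hX).mono fun ω ⟨hω1, hω⟩ => ?_)
  · dsimp only
    rw [mix_chord]
    exact ENNReal.ofReal_le_ofReal (one_div_chord_le (mix_pos hp0 hp1.le hω) ht0.le ht1.le)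
  · have hd1 : p + (1 - p) * X ω ≠ 1 := by
      rw [Ne, ← sub_eq_zero, show p + (1 - p) * X ω - 1 = (1 - p) * (X ω - 1) by ring]
      exact mul_ne_zero (by linarith) (sub_ne_zero.2 hω1)
    rw [mix_chord]
    refine ((ENNReal.ofReal_lt_ofReal_iff ?_).2
      (one_div_chord_lt (mix_pos hp0 hp1.le hω) hd1 ht0 ht1)).ne
    have := mix_pos hp0 hp1.le hω
    have : 0 < 1 - t := by linarith
    positivity

lemma lt_one_of_eq_one [IsProbabilityMeasure P] (hXm : AEMeasurable X P)
    (hX : ∀ᵐ ω ∂P, 0 < X ω) (hX1 : ∃ᵐ ω ∂P, X ω ≠ 1) (hp0 : 0 ≤ p) (hpq : p < q) (hq1 : q < 1)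
    (hFp : invMixMean P X p = 1) : invMixMean P X q < 1 := by
  set t := (1 - q) / (1 - p)
  have hp1 : 0 < 1 - p := by linarith
  have hq : q = t * p + (1 - t) := by simp only [t]; field_simp; ring
  have ht0 : 0 < t := div_pos (by linarith) hp1
  have ht1 : t < 1 := (div_lt_one hp1).2 (by linarith)
  calc invMixMean P X q = invMixMean P X (t * p + (1 - t)) := by rw [← hq]
    _ < ENNReal.ofReal t * invMixMean P X p + ENNReal.ofReal (1 - t) :=
      chord_lt hXm hX hX1 hp0 (by linarith) ht0 ht1
    _ = 1 := by
      rw [hFp, mul_one, ← ENNReal.ofReal_add ht0.le (by linarith), add_sub_cancel,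
        ENNReal.ofReal_one]

lemma eq_of_eq_one [IsProbabilityMeasure P] (hXm : AEMeasurable X P)
    (hX : ∀ᵐ ω ∂P, 0 < X ω) (hX1 : ∃ᵐ ω ∂P, X ω ≠ 1) (hp : p ∈ Ico 0 1) (hq : q ∈ Ico 0 1)
    (hFp : invMixMean P X p = 1) (hFq : invMixMean P X q = 1) : p = q := by
  rcases lt_trichotomy p q with h | h | h
  · exact absurd hFq (lt_one_of_eq_one hXm hX hX1 hp.1 h hq.2 hFp).ne
  · exact h
  · exact absurd hFp (lt_one_of_eq_one hXm hX hX1 hq.1 h hp.2 hFq).ne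

lemma one_le_lintegral_inv_of_eq_one [IsProbabilityMeasure P] (hX : ∀ᵐ ω ∂P, 0 < X ω)
    (hp0 : 0 ≤ p) (hp1 : p < 1) (hFp : invMixMean P X p = 1) :
    1 ≤ ∫⁻ ω, ENNReal.ofReal (X ω)⁻¹ ∂P := by
  have hchord := chord_le hX le_rfl zero_le_one (sub_nonneg.2 hp1.le) (sub_le_self 1 hp0)
  rw [mul_zero, zero_add, sub_sub_cancel, hFp, zero] at hchord
  by_contra! h
  refine hchord.not_gt ?_
  calc ENNReal.ofReal (1 - p) * ∫⁻ ω, ENNReal.ofReal (X ω)⁻¹ ∂P + ENNReal.ofReal p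
      < ENNReal.ofReal (1 - p) * 1 + ENNReal.ofReal p := by
        gcongr <;> exact ENNReal.ofReal_ne_top
    _ = 1 := by
      rw [mul_one, ← ENNReal.ofReal_add (by linarith) hp0, sub_add_cancel, ENNReal.ofReal_one]

lemma one_lt_lintegral_of_lt_one [IsProbabilityMeasure P] (hXm : AEMeasurable X P)
    (hX : ∀ᵐ ω ∂P, 0 < X ω) (hq0 : 0 ≤ q) (hq1 : q < 1) (hFq : invMixMean P X q < 1) :
    1 < ∫⁻ ω, ENNReal.ofReal (X ω) ∂P := by
  set c := ENNReal.ofReal (1 - q)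
  have key : 1 + c ≤ invMixMean P X q + c * ∫⁻ ω, ENNReal.ofReal (X ω) ∂P := by
    rw [← lintegral_const_mul' _ _ ENNReal.ofReal_ne_top, invMixMean,
      ← lintegral_add_right' _ (by fun_prop)]
    calc 1 + c = ∫⁻ _, ENNReal.ofReal (1 + (1 - q)) ∂P := by
          rw [lintegral_const, measure_univ, mul_one, ENNReal.ofReal_add zero_le_one (by linarith),
            ENNReal.ofReal_one]
      _ ≤ _ := lintegral_mono_ae <| by
        filter_upwards [hX] with ω hω
        have hd := mix_pos hq0 hq1.le hω
        rw [← ENNReal.ofReal_mul (by linarith),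
          ← ENNReal.ofReal_add (by positivity) (by positivity)]
        refine ENNReal.ofReal_le_ofReal ?_
        have : 2 ≤ 1 / (q + (1 - q) * X ω) + (q + (1 - q) * X ω) := by
          rw [div_add' _ _ _ hd.ne', le_div_iff₀ hd]
          nlinarith [sq_nonneg (q + (1 - q) * X ω - 1)]
        linarith
  by_contra! hE
  have hcE : c * ∫⁻ ω, ENNReal.ofReal (X ω) ∂P ≤ c := mul_le_of_le_one_right' hE
  exact key.not_gt (ENNReal.add_lt_add_of_lt_of_le (ne_top_of_le_ne_top ENNReal.ofReal_ne_top hcE)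
    hFq hcE)

/-- `(X - 1) / (q + (1 - q) X)` is the difference quotient `(1 - 1 / (q + (1 - q) X)) / (1 - q)`,
which tends to `X - 1` as `q → 1`; the shift by `2` keeps it nonnegative for `q ≥ 1 / 2`. -/
lemma add_mul_lintegral_slope_eq [IsProbabilityMeasure P] (hXm : AEMeasurable X P)
    (hX : ∀ᵐ ω ∂P, 0 < X ω) (hq0 : 1 / 2 ≤ q) (hq1 : q ≤ 1) :
    invMixMean P X q + ENNReal.ofReal (1 - q) *
        ∫⁻ ω, ENNReal.ofReal (2 + (X ω - 1) / (q + (1 - q) * X ω)) ∂P =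
      1 + ENNReal.ofReal (1 - q) * 2 := by
  rw [← lintegral_const_mul' _ _ ENNReal.ofReal_ne_top, invMixMean,
    ← lintegral_add_right' _ (by fun_prop)]
  calc _ = ∫⁻ _, ENNReal.ofReal (1 + (1 - q) * 2) ∂P := lintegral_congr_ae <| by
        filter_upwards [hX] with ω hω
        have hd := mix_pos (by linarith) hq1 hω
        have h2 : -2 ≤ (X ω - 1) / (q + (1 - q) * X ω) := by
          rw [le_div_iff₀ hd]
          nlinarith
        rw [← ENNReal.ofReal_mul (by linarith),
          ← ENNReal.ofReal_add (by positivity) (mul_nonneg (by linarith) (by linarith))]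
        congr 1
        field_simp
        ring
    _ = 1 + ENNReal.ofReal (1 - q) * 2 := by
      rw [lintegral_const, measure_univ, mul_one, ENNReal.ofReal_add zero_le_one (by linarith),
        ENNReal.ofReal_mul (by linarith), ENNReal.ofReal_one, ENNReal.ofReal_ofNat]

lemma eventually_two_lt_lintegral_slope [IsProbabilityMeasure P] (hXm : AEMeasurable X P)
    (hX : ∀ᵐ ω ∂P, 0 < X ω) (hE : 1 < ∫⁻ ω, ENNReal.ofReal (X ω) ∂P) :
    ∀ᶠ q in 𝓝[<] 1, 2 < ∫⁻ ω, ENNReal.ofReal (2 + (X ω - 1) / (q + (1 - q) * X ω)) ∂P := by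
  refine eventually_lt_lintegral_of_tendsto (g := fun ω => ENNReal.ofReal (1 + X ω))
    (fun q => by fun_prop) (ae_of_all _ fun ω => ?_) ?_
  · have hcont : ContinuousAt (fun q => 2 + (X ω - 1) / (q + (1 - q) * X ω)) 1 := by
      fun_prop (disch := norm_num)
    have h1 : 2 + (X ω - 1) / (1 + (1 - 1) * X ω) = 1 + X ω := by ring
    exact (ENNReal.tendsto_ofReal (h1 ▸ hcont.tendsto)).mono_left nhdsWithin_le_nhds
  · calc (2 : ℝ≥0∞) = 1 + 1 := one_add_one_eq_two.symm
      _ < 1 + ∫⁻ ω, ENNReal.ofReal (X ω) ∂P := ENNReal.add_lt_add_left ENNReal.one_ne_top hE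
      _ = ∫⁻ ω, (1 + ENNReal.ofReal (X ω)) ∂P := by
        rw [lintegral_add_left measurable_const, lintegral_one, measure_univ]
      _ = ∫⁻ ω, ENNReal.ofReal (1 + X ω) ∂P := lintegral_congr_ae <| by
        filter_upwards [hX] with ω hω
        rw [ENNReal.ofReal_add zero_le_one hω.le, ENNReal.ofReal_one]

lemma eventually_lt_one [IsProbabilityMeasure P] (hXm : AEMeasurable X P)
    (hX : ∀ᵐ ω ∂P, 0 < X ω) (hE : 1 < ∫⁻ ω, ENNReal.ofReal (X ω) ∂P) :
    ∀ᶠ q in 𝓝[<] 1, invMixMean P X q < 1 := by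
  filter_upwards [eventually_two_lt_lintegral_slope hXm hX hE,
    Ioo_mem_nhdsLT (by norm_num : (1 / 2 : ℝ) < 1)] with q hq ⟨hq0, hq1⟩
  by_contra! hF
  refine (add_mul_lintegral_slope_eq hXm hX hq0.le hq1.le).not_gt ?_
  exact ENNReal.add_lt_add_of_le_of_lt ENNReal.one_ne_top hF ((ENNReal.mul_lt_mul_iff_right
    (ENNReal.ofReal_pos.2 (sub_pos.2 hq1)).ne' ENNReal.ofReal_ne_top).2 hq)

lemma eventually_one_lt (hXm : AEMeasurable X P) (hX : ∀ᵐ ω ∂P, 0 < X ω)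
    (hinv : 1 < ∫⁻ ω, ENNReal.ofReal (X ω)⁻¹ ∂P) : ∀ᶠ p in 𝓝[>] 0, 1 < invMixMean P X p := by
  rw [← zero] at hinv
  refine eventually_lt_lintegral_of_tendsto (fun p => by fun_prop) ?_ hinv
  filter_upwards [hX] with ω hω
  exact (tendsto_ofReal_one_div_mix (by simpa using hω.ne')).mono_left nhdsWithin_le_nhds

lemma exists_eq_one [IsProbabilityMeasure P] (hXm : AEMeasurable X P) (hX : ∀ᵐ ω ∂P, 0 < X ω)
    (hE : 1 < ∫⁻ ω, ENNReal.ofReal (X ω) ∂P) (hinv : 1 < ∫⁻ ω, ENNReal.ofReal (X ω)⁻¹ ∂P) :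
    ∃ p ∈ Ioo 0 1, invMixMean P X p = 1 := by
  obtain ⟨b, hFb, hb⟩ := ((eventually_lt_one hXm hX hE).and (Ioo_mem_nhdsLT one_pos)).exists
  obtain ⟨a, hFa, ha⟩ := ((eventually_one_lt hXm hX hinv).and (Ioo_mem_nhdsGT hb.1)).exists
  obtain ⟨p, hp, hFp⟩ := intermediate_value_Icc' ha.2.le
    ((continuousOn hXm hX ha.1).mono (Icc_subset_Icc_right hb.2.le)) ⟨hFb.le, hFa.le⟩
  exact ⟨p, ⟨ha.1.trans_le hp.1, hp.2.trans_lt hb.2⟩, hFp⟩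

lemma one_lt_lintegral_of_eq_one [IsProbabilityMeasure P] (hXm : AEMeasurable X P)
    (hX : ∀ᵐ ω ∂P, 0 < X ω) (hX1 : ∃ᵐ ω ∂P, X ω ≠ 1) (hp0 : 0 ≤ p) (hp1 : p < 1)
    (hFp : invMixMean P X p = 1) : 1 < ∫⁻ ω, ENNReal.ofReal (X ω) ∂P :=
  one_lt_lintegral_of_lt_one hXm hX (q := (p + 1) / 2) (by linarith) (by linarith)
    (lt_one_of_eq_one hXm hX hX1 hp0 (by linarith) (by linarith) hFp)

end invMixMean

/-- **key lemma.** Let `X > 0` a.s. with `P[X = 1] < 1`. Then there exists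
a solution `p ∈ [0,1)` to `E[1/(p + (1−p)·X)] = 1` if and only if `E[X] > 1` and
`E[X⁻¹] ≥ 1` (expectations possibly `+∞`). Any solution in `[0,1)` is unique, and the
unique solution is `p = 0` if and only if `E[X⁻¹] = 1`. -/
theorem total_odds_key_lemma
    {Ω : Type*} {𝒜 : MeasurableSpace Ω}
    (P : @Measure Ω 𝒜) [IsProbabilityMeasure P]
    (X : Ω → ℝ) (hX_meas : Measurable X) (hX_pos : ∀ᵐ ω ∂P, 0 < X ω)
    (hX_ne_one : P {ω | X ω = 1} < 1) :
    ((∃ p ∈ Set.Ico (0:ℝ) 1,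
        ∫⁻ ω, ENNReal.ofReal (1 / (p + (1 - p) * X ω)) ∂P = 1) ↔
      (1 < ∫⁻ ω, ENNReal.ofReal (X ω) ∂P ∧
        1 ≤ ∫⁻ ω, ENNReal.ofReal (X ω)⁻¹ ∂P)) ∧
    (∀ p ∈ Set.Ico (0:ℝ) 1, ∀ p' ∈ Set.Ico (0:ℝ) 1,
      ∫⁻ ω, ENNReal.ofReal (1 / (p + (1 - p) * X ω)) ∂P = 1 →
      ∫⁻ ω, ENNReal.ofReal (1 / (p' + (1 - p') * X ω)) ∂P = 1 → p = p') ∧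
    (∀ p ∈ Set.Ico (0:ℝ) 1,
      ∫⁻ ω, ENNReal.ofReal (1 / (p + (1 - p) * X ω)) ∂P = 1 →
      (p = 0 ↔ ∫⁻ ω, ENNReal.ofReal (X ω)⁻¹ ∂P = 1)) := by
  have hXm : AEMeasurable X P := hX_meas.aemeasurable
  have hX1 : ∃ᵐ ω ∂P, X ω ≠ 1 := frequently_ae_notMem_of_measure_lt_one hX_ne_one
  have huniq : ∀ p ∈ Ico (0 : ℝ) 1, ∀ p' ∈ Ico (0 : ℝ) 1,
      invMixMean P X p = 1 → invMixMean P X p' = 1 → p = p' :=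
    fun p hp p' hp' => invMixMean.eq_of_eq_one hXm hX_pos hX1 hp hp'
  refine ⟨⟨?_, ?_⟩, huniq, fun p hp hFp => ⟨?_, fun hinv => ?_⟩⟩
  · rintro ⟨p, hp, hFp⟩
    exact ⟨invMixMean.one_lt_lintegral_of_eq_one hXm hX_pos hX1 hp.1 hp.2 hFp,
      invMixMean.one_le_lintegral_inv_of_eq_one hX_pos hp.1 hp.2 hFp⟩
  · rintro ⟨hE, hinv⟩
    rcases hinv.eq_or_lt with hinv | hinv
    · exact ⟨0, ⟨le_rfl, one_pos⟩, invMixMean.zero.trans hinv.symm⟩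
    · obtain ⟨p, hp, hFp⟩ := invMixMean.exists_eq_one hXm hX_pos hE hinv
      exact ⟨p, Ioo_subset_Ico_self hp, hFp⟩
  · rintro rfl
    exact invMixMean.zero.symm.trans hFp
  · exact huniq p hp 0 ⟨le_rfl, one_pos⟩ hFp (invMixMean.zero.trans hinv)
end
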